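/- There is an absolute constant c > 0 such that for any dyadic interval G = Δ_j^{(m)} ⊆ [0,1) and any λ > 0, |{x ∈ [0,1) : sup_{k≥1} |S_k(x, 1_G)| > λ}| ≤ c·2^{−m}/λ. -/

import Mathlib

open MeasureTheory Real Set

/-- The `i`-th binary digit of `x ∈ [0,1)` (the coefficient of `2^{-(i+1)}`). -/
noncomputable def dyadicBit (x : ℝ) (i : ℕ) : ℕ := (⌊2 ^ (i + 1) * x⌋).toNat % 2

/-- Dyadic (mod 2, digit-wise) addition `x ⊕ y` of binary expansions. -/
noncomputable def dyadicAdd (x y : ℝ) : ℝ :=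
  ∑' i : ℕ, (if dyadicBit x i = dyadicBit y i then (0 : ℝ) else 1) / 2 ^ (i + 1)

/-- The `n`-th Walsh function on `[0,1)` in the Paley ordering. -/
noncomputable def walsh (n : ℕ) (x : ℝ) : ℝ :=
  ∏ i ∈ Finset.range (n + 1),
    if n.testBit i ∧ dyadicBit x i = 1 then (-1 : ℝ) else 1

/-- The Walsh–Dirichlet kernel `D_m = ∑_{k=0}^{m-1} w_k`. -/
noncomputable def walshDirichlet (m : ℕ) (x : ℝ) : ℝ :=
  ∑ k ∈ Finset.range m, walsh k x

/-- The `k`-th partial sum of the Walsh–Fourier series of `f`: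
`S_k(x,f) = ∫_0^1 D_k(x ⊕ t) f(t) dt`. -/
noncomputable def walshSum (k : ℕ) (f : ℝ → ℝ) (x : ℝ) : ℝ :=
  ∫ t in (0 : ℝ)..1, walshDirichlet k (dyadicAdd x t) * f t

lemma dyadicBit_le_one (x : ℝ) (i : ℕ) : dyadicBit x i ≤ 1 := by
  have : dyadicBit x i < 2 := Nat.mod_lt _ (by norm_num)
  omega

lemma floor_pow_succ (x : ℝ) (hx : 0 ≤ x) (n : ℕ) :
    ⌊2 ^ (n+1) * x⌋ = 2 * ⌊2 ^ n * x⌋ + (dyadicBit x n : ℤ) := by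
  have h1 : (2:ℝ) ^ (n+1) * x = 2 * (2 ^ n * x) := by ring
  have hA : (2:ℤ) * ⌊2 ^ n * x⌋ ≤ ⌊2 ^ (n+1) * x⌋ := by
    rw [h1]
    refine Int.le_floor.2 ?_
    have := Int.floor_le (2 ^ n * x)
    push_cast
    linarith
  have hB : ⌊2 ^ (n+1) * x⌋ < 2 * ⌊2 ^ n * x⌋ + 2 := by
    rw [h1]
    refine Int.floor_lt.2 ?_
    have := Int.lt_floor_add_one (2 ^ n * x)
    push_cast
    linarith
  have hBnn : 0 ≤ ⌊2 ^ (n+1) * x⌋ := Int.floor_nonneg.2 (by positivity)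
  have hbit : (dyadicBit x n : ℤ) = ⌊2 ^ (n+1) * x⌋ % 2 := by
    unfold dyadicBit; omega
  omega

lemma sum_bits_eq (x : ℝ) (hx0 : 0 ≤ x) (hx1 : x < 1) (n : ℕ) :
    ∑ i ∈ Finset.range n, (dyadicBit x i : ℝ) / 2 ^ (i+1) = (⌊2 ^ n * x⌋ : ℝ) / 2 ^ n := by
  induction n with
  | zero =>
      have : ⌊x⌋ = 0 := Int.floor_eq_zero_iff.mpr ⟨hx0, hx1⟩
      simp [this]
  | succ n ih =>
      rw [Finset.sum_range_succ, ih, floor_pow_succ x hx0 n]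
      push_cast
      field_simp
      ring

lemma hasSum_bits (x : ℝ) (hx0 : 0 ≤ x) (hx1 : x < 1) :
    HasSum (fun i => (dyadicBit x i : ℝ) / 2 ^ (i+1)) x := by
  rw [hasSum_iff_tendsto_nat_of_nonneg (fun i => by positivity)]
  have key : ∀ n : ℕ, |∑ i ∈ Finset.range n, (dyadicBit x i : ℝ) / 2 ^ (i+1) - x| ≤ (1/2 : ℝ) ^ n := by
    intro n
    rw [sum_bits_eq x hx0 hx1 n]
    have h1 : (⌊2 ^ n * x⌋ : ℝ) ≤ 2 ^ n * x := Int.floor_le _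
    have h2 : 2 ^ n * x < (⌊2 ^ n * x⌋ : ℝ) + 1 := Int.lt_floor_add_one _
    have hp : (0:ℝ) < 2 ^ n := by positivity
    have hc : x * 2 ^ n = 2 ^ n * x := mul_comm _ _
    have hinv : (1/2:ℝ) ^ n = 1 / 2 ^ n := by rw [div_pow]; norm_num
    rw [hinv, abs_le]
    constructor
    · rw [neg_le_sub_iff_le_add, ← add_div, le_div_iff₀ hp]
      linarith
    · rw [sub_le_iff_le_add, div_le_iff₀ hp]
      have h5 : (0:ℝ) < 1 / 2 ^ n := by positivity
      nlinarith
  have h0 : Filter.Tendsto (fun n : ℕ => (1/2 : ℝ) ^ n) Filter.atTop (nhds 0) :=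
    tendsto_pow_atTop_nhds_zero_of_lt_one (by norm_num) (by norm_num)
  have key' : ∀ n : ℕ, ‖∑ i ∈ Finset.range n, (dyadicBit x i : ℝ) / 2 ^ (i+1) - x‖ ≤ (1/2 : ℝ) ^ n := by
    simpa only [Real.norm_eq_abs] using key
  have := squeeze_zero_norm key' h0
  have h2 := this.add_const x
  simpa using h2

lemma eq_of_bits_eq {x y : ℝ} (hx0 : 0 ≤ x) (hx1 : x < 1) (hy0 : 0 ≤ y) (hy1 : y < 1)
    (h : ∀ i, dyadicBit x i = dyadicBit y i) : x = y := by
  have h1 := hasSum_bits x hx0 hx1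
  have h2 := hasSum_bits y hy0 hy1
  have : (fun i => (dyadicBit x i : ℝ) / 2 ^ (i+1)) = fun i => (dyadicBit y i : ℝ) / 2 ^ (i+1) := by
    funext i; rw [h i]
  rw [this] at h1
  exact h1.unique h2

/-- XOR of the `i`-th bits, as a natural number. -/
noncomputable def xorBit (x t : ℝ) (i : ℕ) : ℕ :=
  if dyadicBit x i = dyadicBit t i then 0 else 1

lemma xorBit_le_one (x t : ℝ) (i : ℕ) : xorBit x t i ≤ 1 := by
  unfold xorBit; split <;> omega

lemma dyadicAdd_eq_tsum (x t : ℝ) :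
    dyadicAdd x t = ∑' i : ℕ, (xorBit x t i : ℝ) / 2 ^ (i+1) := by
  unfold dyadicAdd xorBit
  congr 1; funext i; split <;> simp

lemma summable_pow_half : Summable (fun i : ℕ => (1:ℝ) / 2 ^ (i+1)) := by
  have : (fun i : ℕ => (1:ℝ) / 2 ^ (i+1)) = fun i : ℕ => (1/2:ℝ) * (1/2) ^ i := by
    funext i; rw [div_pow, pow_succ]; norm_num
  rw [this]
  exact (summable_geometric_of_lt_one (by norm_num) (by norm_num)).mul_left _

lemma tsum_pow_half : ∑' i : ℕ, (1:ℝ) / 2 ^ (i+1) = 1 := by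
  have : (fun i : ℕ => (1:ℝ) / 2 ^ (i+1)) = fun i : ℕ => (1/2:ℝ) * (1/2) ^ i := by
    funext i; rw [div_pow, pow_succ]; norm_num
  rw [this, tsum_mul_left, tsum_geometric_of_lt_one (by norm_num) (by norm_num)]
  norm_num

lemma summable_bits_div {c : ℕ → ℕ} (hc : ∀ i, c i ≤ 1) :
    Summable (fun i : ℕ => (c i : ℝ) / 2 ^ (i+1)) := by
  refine Summable.of_nonneg_of_le (fun i => by positivity) (fun i => ?_) summable_pow_half
  have := hc i
  gcongr
  exact_mod_cast this

lemma summable_xor (x t : ℝ) : Summable (fun i : ℕ => (xorBit x t i : ℝ) / 2 ^ (i+1)) :=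
  summable_bits_div (xorBit_le_one x t)

lemma dyadicAdd_nonneg (x t : ℝ) : 0 ≤ dyadicAdd x t := by
  rw [dyadicAdd_eq_tsum]
  exact tsum_nonneg (fun i => by positivity)

lemma dyadicAdd_le_one (x t : ℝ) : dyadicAdd x t ≤ 1 := by
  rw [dyadicAdd_eq_tsum, ← tsum_pow_half]
  refine Summable.tsum_le_tsum (fun i => ?_) (summable_xor x t) summable_pow_half
  have := xorBit_le_one x t i
  gcongr
  exact_mod_cast this

lemma abs_sub_le_dyadicAdd {x t : ℝ} (hx0 : 0 ≤ x) (hx1 : x < 1) (ht0 : 0 ≤ t) (ht1 : t < 1) :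
    |x - t| ≤ dyadicAdd x t := by
  have hs := (hasSum_bits x hx0 hx1).sub (hasSum_bits t ht0 ht1)
  have hxt : x - t = ∑' i : ℕ, ((dyadicBit x i : ℝ) / 2 ^ (i+1) - (dyadicBit t i : ℝ) / 2 ^ (i+1)) :=
    hs.tsum_eq.symm
  have habs : ∀ i : ℕ, |(dyadicBit x i : ℝ) / 2 ^ (i+1) - (dyadicBit t i : ℝ) / 2 ^ (i+1)|
      = (xorBit x t i : ℝ) / 2 ^ (i+1) := by
    intro i
    have hx := dyadicBit_le_one x i
    have ht := dyadicBit_le_one t i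
    unfold xorBit
    interval_cases h1 : dyadicBit x i <;> interval_cases h2 : dyadicBit t i <;>
      simp <;> rw [abs_of_nonneg (by positivity) ] <;> norm_num
  have hsum : Summable fun i : ℕ =>
      ‖(dyadicBit x i : ℝ) / 2 ^ (i+1) - (dyadicBit t i : ℝ) / 2 ^ (i+1)‖ := by
    have : (fun i : ℕ => ‖(dyadicBit x i : ℝ) / 2 ^ (i+1) - (dyadicBit t i : ℝ) / 2 ^ (i+1)‖)
        = fun i : ℕ => (xorBit x t i : ℝ) / 2 ^ (i+1) := by
      funext i; rw [Real.norm_eq_abs, habs i]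
    rw [this]; exact summable_xor x t
  rw [hxt, dyadicAdd_eq_tsum]
  calc |∑' i : ℕ, ((dyadicBit x i : ℝ) / 2 ^ (i+1) - (dyadicBit t i : ℝ) / 2 ^ (i+1))|
      ≤ ∑' i : ℕ, ‖(dyadicBit x i : ℝ) / 2 ^ (i+1) - (dyadicBit t i : ℝ) / 2 ^ (i+1)‖ :=
        norm_tsum_le_tsum_norm hsum
    _ = ∑' i : ℕ, (xorBit x t i : ℝ) / 2 ^ (i+1) := by
        congr 1; funext i; rw [Real.norm_eq_abs, habs i]

lemma geom_partial (n : ℕ) : ∑ i ∈ Finset.range (n+1), (1:ℝ) / 2 ^ (i+1) = 1 - 1 / 2 ^ (n+1) := by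
  induction n with
  | zero => norm_num
  | succ k ih =>
      rw [Finset.sum_range_succ, ih]
      field_simp
      ring

lemma tail_lt {c : ℕ → ℕ} (hc : ∀ i, c i ≤ 1) (n : ℕ)
    (hz : ∃ i, n+1 ≤ i ∧ c i = 0) :
    ∑' i : ℕ, (c (i + (n+1)) : ℝ) / 2 ^ ((i + (n+1))+1) < 1 / 2 ^ (n+1) := by
  obtain ⟨i0, hi0, hc0⟩ := hz
  have hs1 : Summable (fun i : ℕ => (c (i + (n+1)) : ℝ) / 2 ^ ((i + (n+1))+1)) :=
    (summable_nat_add_iff (f := fun i : ℕ => (c i : ℝ) / 2 ^ (i+1)) (n+1)).2 (summable_bits_div hc)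
  have hs2 : Summable (fun i : ℕ => (1 : ℝ) / 2 ^ ((i + (n+1))+1)) :=
    (summable_nat_add_iff (f := fun i : ℕ => (1:ℝ) / 2 ^ (i+1)) (n+1)).2 summable_pow_half
  have hlt : ∑' i : ℕ, (c (i + (n+1)) : ℝ) / 2 ^ ((i + (n+1))+1)
      < ∑' i : ℕ, (1:ℝ) / 2 ^ ((i + (n+1))+1) := by
    refine Summable.tsum_lt_tsum (i := i0 - (n+1)) (fun i => ?_) ?_ hs1 hs2
    · have := hc (i + (n+1)); gcongr; exact Nat.cast_le_one.mpr this
    · have he : i0 - (n+1) + (n+1) = i0 := by omega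
      rw [he, hc0]
      simp
  have heq : ∑' i : ℕ, (1:ℝ) / 2 ^ ((i + (n+1))+1) = 1 / 2 ^ (n+1) := by
    have h2 := (Summable.sum_add_tsum_nat_add (f := fun i : ℕ => (1:ℝ) / 2 ^ (i+1)) (n+1) summable_pow_half).symm
    rw [tsum_pow_half, geom_partial] at h2
    linarith
  rw [heq] at hlt
  exact hlt

lemma bits_of_tsum (c : ℕ → ℕ) (hc : ∀ i, c i ≤ 1)
    (hz : ∀ N : ℕ, ∃ i, N ≤ i ∧ c i = 0) (n : ℕ) :
    dyadicBit (∑' i : ℕ, (c i : ℝ) / 2 ^ (i+1)) n = c n := by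
  have hsum := summable_bits_div hc
  have hyPT : ∑' i : ℕ, (c i : ℝ) / 2 ^ (i+1)
      = (∑ i ∈ Finset.range (n+1), (c i : ℝ) / 2 ^ (i+1))
        + ∑' i : ℕ, (c (i + (n+1)) : ℝ) / 2 ^ ((i + (n+1))+1) :=
    (Summable.sum_add_tsum_nat_add (f := fun i : ℕ => (c i : ℝ) / 2 ^ (i+1)) (n+1) hsum).symm
  have hTnn : 0 ≤ ∑' i : ℕ, (c (i + (n+1)) : ℝ) / 2 ^ ((i + (n+1))+1) :=
    tsum_nonneg (fun i => by positivity)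
  have hTlt := tail_lt hc n (hz (n+1))
  have hPM : (2:ℝ) ^ (n+1) * (∑ i ∈ Finset.range (n+1), (c i : ℝ) / 2 ^ (i+1))
      = ((∑ i ∈ Finset.range (n+1), c i * 2 ^ (n - i) : ℕ) : ℝ) := by
    rw [Finset.mul_sum]
    push_cast
    refine Finset.sum_congr rfl (fun i hi => ?_)
    have hin : i ≤ n := by
      have := Finset.mem_range.1 hi; omega
    have hpow : (2:ℝ) ^ (n - i) * 2 ^ (i+1) = 2 ^ (n+1) := by
      rw [← pow_add]
      congr 1
      omega
    field_simp
    rw [mul_comm ((2:ℝ)^(n+1)) _, mul_assoc, ← hpow]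
    ring
  have hfloor : ⌊2 ^ (n+1) * ∑' i : ℕ, (c i : ℝ) / 2 ^ (i+1)⌋
      = ((∑ i ∈ Finset.range (n+1), c i * 2 ^ (n - i) : ℕ) : ℤ) := by
    have hp : (0:ℝ) < 2 ^ (n+1) := by positivity
    rw [Int.floor_eq_iff]
    constructor
    · push_cast
      rw [hyPT, mul_add]
      push_cast at hPM
      nlinarith [mul_nonneg (le_of_lt hp) hTnn]
    · push_cast
      rw [hyPT, mul_add]
      push_cast at hPM
      have hT1 : (2:ℝ) ^ (n+1) * (∑' i : ℕ, (c (i + (n+1)) : ℝ) / 2 ^ ((i + (n+1))+1)) < 1 := by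
        calc (2:ℝ) ^ (n+1) * (∑' i : ℕ, (c (i + (n+1)) : ℝ) / 2 ^ ((i + (n+1))+1))
            < 2 ^ (n+1) * (1 / 2 ^ (n+1)) := (mul_lt_mul_iff_right₀ hp).2 hTlt
          _ = 1 := by field_simp
      linarith
  have hMmod : (∑ i ∈ Finset.range (n+1), c i * 2 ^ (n - i)) % 2 = c n := by
    rw [Finset.sum_range_succ]
    have h2 : ∑ i ∈ Finset.range n, c i * 2 ^ (n - i)
        = 2 * ∑ i ∈ Finset.range n, c i * 2 ^ (n - i - 1) := by
      rw [Finset.mul_sum]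
      refine Finset.sum_congr rfl (fun i hi => ?_)
      have hin : i < n := Finset.mem_range.1 hi
      have : 2 ^ (n - i) = 2 * 2 ^ (n - i - 1) := by
        rw [← pow_succ']
        congr 1
        omega
      rw [this]; ring
    rw [h2, Nat.sub_self, pow_zero, mul_one]
    have := hc n
    omega
  unfold dyadicBit
  rw [hfloor, Int.toNat_natCast]
  exact hMmod

lemma dyadicBit_dyadicAdd {x t : ℝ}
    (hz : ∀ N : ℕ, ∃ i, N ≤ i ∧ xorBit x t i = 0) (n : ℕ) :
    dyadicBit (dyadicAdd x t) n = xorBit x t n := by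
  rw [dyadicAdd_eq_tsum]
  exact bits_of_tsum _ (xorBit_le_one x t) hz n

/-- The exceptional set of `t` whose bits are eventually complementary to those of `x`. -/
def badSet (x : ℝ) : Set ℝ :=
  ⋃ N : ℕ, {t : ℝ | t ∈ Set.Ico (0:ℝ) 1 ∧ ∀ i, N ≤ i → xorBit x t i = 1}

lemma countable_badSet (x : ℝ) : (badSet x).Countable := by
  refine Set.countable_iUnion (fun N => Set.Finite.countable ?_)
  have hb : ∀ t : ℝ, ∀ i : ℕ, dyadicBit t i < 2 := fun t i => Nat.mod_lt _ (by norm_num)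
  refine Set.Finite.of_finite_image
    (f := fun t => (fun i : Fin N => (⟨dyadicBit t i, hb t i⟩ : Fin 2))) (Set.toFinite _) ?_
  intro t ht u hu heq
  obtain ⟨⟨ht0, ht1⟩, htb⟩ := ht
  obtain ⟨⟨hu0, hu1⟩, hub⟩ := hu
  refine eq_of_bits_eq ht0 ht1 hu0 hu1 (fun i => ?_)
  rcases lt_or_ge i N with hiN | hiN
  · have := congrFun heq ⟨i, hiN⟩
    simpa using this
  · have h1 := htb i hiN
    have h2 := hub i hiN
    have e1 := dyadicBit_le_one x i
    have e2 := dyadicBit_le_one t i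
    have e3 := dyadicBit_le_one u i
    unfold xorBit at h1 h2
    split at h1 <;> split at h2 <;> omega

lemma good_of_not_bad {x t : ℝ} (ht : t ∈ Set.Ico (0:ℝ) 1) (h : t ∉ badSet x) :
    ∀ N : ℕ, ∃ i, N ≤ i ∧ xorBit x t i = 0 := by
  intro N
  by_contra hcon
  push_neg at hcon
  refine h ?_
  refine Set.mem_iUnion.2 ⟨N, ht, fun i hi => ?_⟩
  have := hcon i hi
  have := xorBit_le_one x t i
  omega

lemma dyadicAdd_lt_one {x t : ℝ} (hz : ∃ i, xorBit x t i = 0) : dyadicAdd x t < 1 := by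
  obtain ⟨i0, h0⟩ := hz
  rw [dyadicAdd_eq_tsum, ← tsum_pow_half]
  refine Summable.tsum_lt_tsum (i := i0) (fun i => ?_) ?_ (summable_xor x t) summable_pow_half
  · have := xorBit_le_one x t i
    gcongr
    exact Nat.cast_le_one.mpr this
  · rw [h0]
    simp

-- Walsh function basics
lemma walsh_eq_prod {n M : ℕ} (hM : n + 1 ≤ M) (x : ℝ) :
    walsh n x = ∏ i ∈ Finset.range M,
      (if n.testBit i ∧ dyadicBit x i = 1 then (-1:ℝ) else 1) := by
  unfold walsh
  refine Finset.prod_subset (Finset.range_subset_range.2 hM) ?_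
  intro i hi hin
  have hni : i ≥ n + 1 := by
    by_contra hcc
    exact hin (Finset.mem_range.2 (by omega))
  have : ¬ n.testBit i := by
    have h1 : n < 2 ^ i := lt_of_lt_of_le (Nat.lt_two_pow_self (n := n))
      (Nat.pow_le_pow_right (by norm_num) (by omega))
    simp [Nat.testBit_lt_two_pow h1]
  simp [this]

lemma abs_walsh (n : ℕ) (x : ℝ) : |walsh n x| = 1 := by
  unfold walsh
  rw [Finset.abs_prod]
  refine Finset.prod_eq_one (fun i _ => ?_)
  split <;> norm_num

lemma walsh_le_one (n : ℕ) (x : ℝ) : |walsh n x| ≤ 1 := le_of_eq (abs_walsh n x)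

lemma testBit_two_pow_add {s j : ℕ} (hj : j < 2 ^ s) (i : ℕ) :
    (2 ^ s + j).testBit i = (decide (i = s) || j.testBit i) := by
  have hp : 0 < (2:ℕ) ^ i := Nat.pow_pos (by norm_num)
  rcases lt_trichotomy i s with his | his | his
  · have h1 : (2 ^ s + j) / 2 ^ i = 2 ^ (s - i) + j / 2 ^ i := by
      have h2 : (2:ℕ) ^ s = 2 ^ i * 2 ^ (s - i) := by rw [← pow_add]; congr 1; omega
      rw [h2, Nat.mul_add_div hp]
    have h2 : (2:ℕ) ^ (s - i) % 2 = 0 := by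
      have hne : s - i ≠ 0 := by omega
      rcases Nat.exists_eq_succ_of_ne_zero hne with ⟨k, hk⟩
      rw [hk, pow_succ]
      omega
    rw [Nat.testBit_eq_decide_div_mod_eq, Nat.testBit_eq_decide_div_mod_eq, h1]
    have h3 : (2 ^ (s - i) + j / 2 ^ i) % 2 = j / 2 ^ i % 2 := by omega
    rw [h3]
    simp [show i ≠ s by omega]
  · subst his
    have hj0 : j / 2 ^ i = 0 := Nat.div_eq_of_lt hj
    have h1 : (2 ^ i + j) / 2 ^ i = 1 := by
      rw [Nat.add_div_left _ hp, hj0]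
    have h2 : j.testBit i = false := Nat.testBit_lt_two_pow hj
    rw [Nat.testBit_eq_decide_div_mod_eq, h1, h2]
    simp
  · have hlt : 2 ^ s + j < 2 ^ i := by
      have : (2:ℕ) ^ (s+1) ≤ 2 ^ i := Nat.pow_le_pow_right (by norm_num) (by omega)
      have := Nat.pow_lt_pow_right (show 1 < 2 by norm_num) his
      omega
    have h1 : (2 ^ s + j) / 2 ^ i = 0 := Nat.div_eq_of_lt hlt
    have h2 : j.testBit i = false := Nat.testBit_lt_two_pow (by omega)
    rw [Nat.testBit_eq_decide_div_mod_eq, h1, h2]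
    simp [show i ≠ s by omega]

lemma walsh_two_pow_add {s j : ℕ} (hj : j < 2 ^ s) (x : ℝ) :
    walsh (2 ^ s + j) x = walsh (2 ^ s) x * walsh j x := by
  have hM1 : 2 ^ s + 1 ≤ 2 ^ s + j + 1 := by omega
  have hM2 : j + 1 ≤ 2 ^ s + j + 1 := by omega
  rw [walsh_eq_prod (le_refl (2 ^ s + j + 1)) x, walsh_eq_prod hM1 x, walsh_eq_prod hM2 x,
    ← Finset.prod_mul_distrib]
  refine Finset.prod_congr rfl (fun i _ => ?_)
  rw [testBit_two_pow_add hj i, Nat.testBit_two_pow]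
  rcases eq_or_ne i s with h | h
  · subst h
    have : j.testBit i = false := Nat.testBit_lt_two_pow hj
    simp [this]
  · simp [h, Ne.symm h]

lemma walsh_two_pow (s : ℕ) (x : ℝ) :
    walsh (2 ^ s) x = if dyadicBit x s = 1 then (-1:ℝ) else 1 := by
  unfold walsh
  rw [Finset.prod_eq_single s]
  · rw [Nat.testBit_two_pow]
    simp
  · intro i _ his
    rw [Nat.testBit_two_pow]
    simp [Ne.symm his]
  · intro hs
    exfalso
    exact hs (Finset.mem_range.2 (by have := Nat.lt_two_pow_self (n := s); omega))

lemma walsh_dyadicAdd {x t : ℝ} (n : ℕ)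
    (hbit : ∀ i, dyadicBit (dyadicAdd x t) i = xorBit x t i) :
    walsh n (dyadicAdd x t) = walsh n x * walsh n t := by
  unfold walsh
  rw [← Finset.prod_mul_distrib]
  refine Finset.prod_congr rfl (fun i _ => ?_)
  rw [hbit i]
  unfold xorBit
  rcases Bool.eq_false_or_eq_true (n.testBit i) with hb | hb
  case inr => simp [hb]
  · have h1 := dyadicBit_le_one x i
    have h2 := dyadicBit_le_one t i
    simp only [hb, true_and]
    rcases Nat.le_one_iff_eq_zero_or_eq_one.mp h1 with hx | hx <;>
      rcases Nat.le_one_iff_eq_zero_or_eq_one.mp h2 with ht | ht <;>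
        simp [hx, ht]

lemma walshDirichlet_two_pow_add {s j : ℕ} (hj : j ≤ 2 ^ s) (u : ℝ) :
    walshDirichlet (2 ^ s + j) u
      = walshDirichlet (2 ^ s) u + walsh (2 ^ s) u * walshDirichlet j u := by
  unfold walshDirichlet
  rw [Finset.sum_range_add, Finset.mul_sum]
  congr 1
  refine Finset.sum_congr rfl (fun i hi => ?_)
  exact walsh_two_pow_add (lt_of_lt_of_le (Finset.mem_range.1 hi) hj) u

lemma dyadicBit_zero_iff {u : ℝ} (h0 : 0 ≤ u) {s : ℕ} (hs : u < 1 / 2 ^ s) :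
    dyadicBit u s = if u < 1 / 2 ^ (s+1) then 0 else 1 := by
  have hp : (0:ℝ) < 2 ^ (s+1) := by positivity
  unfold dyadicBit
  split
  · next h =>
      have : ⌊2 ^ (s+1) * u⌋ = 0 := by
        rw [Int.floor_eq_zero_iff]
        constructor
        · positivity
        · calc 2 ^ (s+1) * u < 2 ^ (s+1) * (1 / 2 ^ (s+1)) := by
                exact (mul_lt_mul_iff_right₀ hp).2 h
            _ = 1 := by field_simp
      rw [this]; simp
  · next h =>
      push_neg at h
      have : ⌊2 ^ (s+1) * u⌋ = 1 := by
        rw [Int.floor_eq_iff]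
        constructor
        · push_cast
          calc (1:ℝ) = 2 ^ (s+1) * (1 / 2 ^ (s+1)) := by field_simp
            _ ≤ 2 ^ (s+1) * u := by exact (mul_le_mul_iff_right₀ hp).2 h
        · push_cast
          have hss : (1:ℝ) / 2 ^ s * 2 ^ (s+1) = 2 := by
            rw [pow_succ]
            field_simp
          have hlt2 : 2 ^ (s+1) * u < 2 := by
            calc 2 ^ (s+1) * u < 2 ^ (s+1) * (1 / 2 ^ s) := by
                  exact (mul_lt_mul_iff_right₀ hp).2 hs
              _ = 2 := by rw [mul_comm]; exact hss
          linarith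
      rw [this]; simp

lemma walshDirichlet_two_pow {u : ℝ} (h0 : 0 ≤ u) (h1 : u < 1) (s : ℕ) :
    walshDirichlet (2 ^ s) u = if u < 1 / 2 ^ s then (2:ℝ) ^ s else 0 := by
  induction s with
  | zero =>
      simp only [pow_zero]
      have hw : walshDirichlet 1 u = walsh 0 u := by
        unfold walshDirichlet; simp
      rw [hw]
      unfold walsh
      norm_num [h1]
  | succ s ih =>
      have hidx : (2:ℕ) ^ (s+1) = 2 ^ s + 2 ^ s := by rw [pow_succ]; omega
      rw [hidx, walshDirichlet_two_pow_add (le_refl (2 ^ s)) u, ih, walsh_two_pow]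
      have hmono : (1:ℝ) / 2 ^ (s+1) < 1 / 2 ^ s := by
        apply div_lt_div_of_pos_left (by norm_num) (by positivity)
        rw [pow_succ]; nlinarith [pow_pos (show (0:ℝ) < 2 by norm_num) s]
      rcases lt_or_ge u (1 / 2 ^ (s+1)) with hc1 | hc1
      · have hc0 : u < 1 / 2 ^ s := lt_trans hc1 hmono
        have hbit : dyadicBit u s = 0 := by
          rw [dyadicBit_zero_iff h0 hc0, if_pos hc1]
        rw [if_pos hc0, if_pos hc1, hbit]
        norm_num
        rw [pow_succ]; ring
      · rcases lt_or_ge u (1 / 2 ^ s) with hc0 | hc0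
        · have hbit : dyadicBit u s = 1 := by
            rw [dyadicBit_zero_iff h0 hc0, if_neg (not_lt.2 hc1)]
          rw [if_pos hc0, if_neg (not_lt.2 hc1), hbit]
          norm_num
        · rw [if_neg (not_lt.2 hc0), if_neg (not_lt.2 (le_trans (le_of_lt hmono) hc0))]
          ring

lemma abs_walshDirichlet_le (k : ℕ) (u : ℝ) : |walshDirichlet k u| ≤ k := by
  unfold walshDirichlet
  calc |∑ i ∈ Finset.range k, walsh i u| ≤ ∑ i ∈ Finset.range k, |walsh i u| :=
        Finset.abs_sum_le_sum_abs _ _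
    _ = ∑ i ∈ Finset.range k, (1:ℝ) := by
        refine Finset.sum_congr rfl (fun i _ => abs_walsh i u)
    _ = k := by simp

lemma walshDirichlet_bound : ∀ k : ℕ, ∀ u : ℝ, 0 < u → u < 1 → |walshDirichlet k u| ≤ 2 / u := by
  intro k
  induction k using Nat.strong_induction_on with
  | _ k ih =>
    intro u hu0 hu1
    rcases Nat.eq_zero_or_pos k with hk | hk
    · subst hk
      unfold walshDirichlet
      simp
      positivity
    · have h2s : 2 ^ Nat.log2 k ≤ k := Nat.log2_self_le (by omega)
      have hks : k < 2 ^ (Nat.log2 k + 1) := Nat.lt_log2_self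
      set s := Nat.log2 k with hs
      set j := k - 2 ^ s with hjdef
      have hj : j < 2 ^ s := by rw [pow_succ] at hks; omega
      have hk' : k = 2 ^ s + j := by omega
      rw [hk', walshDirichlet_two_pow_add (le_of_lt hj) u]
      have hD2 := walshDirichlet_two_pow (le_of_lt hu0) hu1 s
      rcases lt_or_ge u (1 / 2 ^ s) with hcase | hcase
      · have hDj : |walshDirichlet j u| ≤ j := abs_walshDirichlet_le j u
        have hwj : |walsh (2^s) u * walshDirichlet j u| ≤ j := by
          rw [abs_mul, abs_walsh, one_mul]; exact hDj
        have hb2 : |walshDirichlet (2^s) u| ≤ 2^s := by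
          rw [hD2]
          split
          · rw [abs_of_nonneg (by positivity)]
          · simp
        have htri : |walshDirichlet (2^s) u + walsh (2^s) u * walshDirichlet j u|
            ≤ 2^s + j := le_trans (abs_add_le _ _) (by linarith)
        refine le_trans htri ?_
        have hup : 0 < u := hu0
        have h2su : u * 2 ^ s < 1 := by
          have := (mul_lt_mul_iff_left₀ (show (0:ℝ) < 2 ^ s by positivity)).2 hcase
          field_simp at this
          linarith [this]
        have hjs : (j:ℝ) ≤ 2 ^ s := by
          have : (j:ℕ) ≤ 2 ^ s := le_of_lt hj
          exact_mod_cast this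
        have h2 : (2:ℝ) ^ s + (j:ℝ) ≤ 2 * 2 ^ s := by linarith
        refine le_trans h2 ?_
        rw [le_div_iff₀ hu0]
        nlinarith
      · rw [hD2, if_neg (not_lt.2 hcase), zero_add, abs_mul, abs_walsh, one_mul]
        have hjk : j < k := by
          have : 0 < 2 ^ s := Nat.pow_pos (by norm_num)
          omega
        exact ih j hjk u hu0 hu1

-- Measurability
lemma measurable_dyadicBit (i : ℕ) : Measurable fun x : ℝ => dyadicBit x i := by
  unfold dyadicBit
  have h1 : Measurable fun x : ℝ => ⌊2 ^ (i+1) * x⌋ :=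
    Int.measurable_floor.comp (measurable_const.mul measurable_id)
  exact (measurable_from_top (f := fun z : ℤ => z.toNat % 2)).comp h1

lemma measurable_walsh (n : ℕ) : Measurable (walsh n) := by
  unfold walsh
  refine Finset.measurable_prod _ (fun i _ => ?_)
  have hset : MeasurableSet {x : ℝ | n.testBit i ∧ dyadicBit x i = 1} := by
    rcases Bool.eq_false_or_eq_true (n.testBit i) with hb | hb
    · have : {x : ℝ | n.testBit i ∧ dyadicBit x i = 1} = {x : ℝ | dyadicBit x i = 1} := by
        ext x; simp [hb]
      rw [this]
      exact (measurable_dyadicBit i) (measurableSet_singleton 1)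
    · have : {x : ℝ | n.testBit i ∧ dyadicBit x i = 1} = ∅ := by
        ext x; simp [hb]
      rw [this]; exact MeasurableSet.empty
  exact Measurable.ite hset measurable_const measurable_const

lemma measurable_walshDirichlet (k : ℕ) : Measurable (walshDirichlet k) := by
  unfold walshDirichlet
  exact Finset.measurable_sum _ (fun i _ => measurable_walsh i)

lemma measurable_dyadicAdd (x : ℝ) : Measurable fun t : ℝ => dyadicAdd x t := by
  have h : (fun t : ℝ => dyadicAdd x t)
      = fun t : ℝ => ∑' i : ℕ, (xorBit x t i : ℝ) / 2 ^ (i+1) := by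
    funext t; exact dyadicAdd_eq_tsum x t
  rw [h]
  have hmeas : ∀ n : ℕ, Measurable fun t : ℝ =>
      ∑ i ∈ Finset.range n, (xorBit x t i : ℝ) / 2 ^ (i+1) := by
    intro n
    refine Finset.measurable_sum _ (fun i _ => ?_)
    refine Measurable.div ?_ measurable_const
    have hbm : Measurable fun t : ℝ => dyadicBit t i := measurable_dyadicBit i
    have : Measurable fun t : ℝ => xorBit x t i := by
      unfold xorBit
      refine Measurable.ite ?_ measurable_const measurable_const
      have : {t : ℝ | dyadicBit x i = dyadicBit t i} = (fun t => dyadicBit t i) ⁻¹' {dyadicBit x i} := by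
        ext t; simp [eq_comm]
      rw [this]
      exact hbm (measurableSet_singleton (dyadicBit x i))
    exact (measurable_from_top (f := fun n : ℕ => (n:ℝ))).comp this
  refine measurable_of_tendsto_metrizable hmeas ?_
  rw [tendsto_pi_nhds]
  intro t
  have hs : Summable fun i : ℕ => (xorBit x t i : ℝ) / 2 ^ (i+1) := summable_xor x t
  exact hs.hasSum.tendsto_sum_nat

lemma intervalIntegrable_of_bounded {f : ℝ → ℝ} {C a b : ℝ} (hf : Measurable f)
    (hC : ∀ t, |f t| ≤ C) : IntervalIntegrable f volume a b := by
  refine IntervalIntegrable.mono_fun' (g := fun _ => C) intervalIntegrable_const ?_ ?_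
  · exact hf.aestronglyMeasurable
  · exact Filter.Eventually.of_forall (fun t => by
      show ‖f t‖ ≤ C
      rw [Real.norm_eq_abs]; exact hC t)

lemma nat_lt_div_succ_mul (q P : ℕ) (hP : 0 < P) : q < (q / P + 1) * P := by
  have h := Nat.div_add_mod q P
  have hr : q % P < P := Nat.mod_lt _ hP
  calc q = P * (q / P) + q % P := h.symm
    _ < P * (q / P) + P := by omega
    _ = (q / P + 1) * P := by ring

lemma floor_dyadic (q p : ℕ) : ⌊(q:ℝ)/2^p⌋ = ((q / 2^p : ℕ) : ℤ) := by
  have hp : (0:ℝ) < 2^p := by positivity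
  have hub : q < (q / 2^p + 1) * 2^p := nat_lt_div_succ_mul q (2^p) (Nat.pow_pos (by norm_num))
  rw [Int.floor_eq_iff]
  constructor
  · push_cast
    rw [le_div_iff₀ hp]
    exact_mod_cast Nat.div_mul_le_self q (2^p)
  · push_cast
    rw [div_lt_iff₀ hp]
    exact_mod_cast hub

lemma floor_const_on_dyadic {p q : ℕ} {y : ℝ} (h1 : (q:ℝ)/2^p ≤ y) (h2 : y < ((q:ℝ)+1)/2^p) :
    ⌊y⌋ = ((q / 2^p : ℕ) : ℤ) := by
  have hp : (0:ℝ) < 2^p := by positivity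
  have hub : q < (q / 2^p + 1) * 2^p := nat_lt_div_succ_mul q (2^p) (Nat.pow_pos (by norm_num))
  rw [Int.floor_eq_iff]
  constructor
  · push_cast
    refine le_trans ?_ h1
    rw [le_div_iff₀ hp]
    exact_mod_cast Nat.div_mul_le_self q (2^p)
  · rw [Int.cast_natCast]
    refine lt_of_lt_of_le h2 ?_
    rw [div_le_iff₀ hp]
    have hub' : q + 1 ≤ q / 2^p * 2^p + 2^p := by
      have hr : (q / 2^p + 1) * 2^p = q / 2^p * 2^p + 2^p := by ring
      omega
    have h3 : ((q:ℝ)) + 1 ≤ ((q / 2^p : ℕ) : ℝ) * 2^p + 2^p := by exact_mod_cast hub'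
    linarith [h3]

lemma dyadicBit_add_half_high (s q : ℕ) {t : ℝ} (ht0 : (q:ℝ)/2^s ≤ t) (i : ℕ) (hi : s < i) :
    dyadicBit (t + 1/2^(s+1)) i = dyadicBit t i := by
  have htnn : 0 ≤ t := le_trans (by positivity) ht0
  unfold dyadicBit
  have hsplit : (2:ℝ)^(i+1) = ((2^(i-s) : ℕ):ℝ) * 2^(s+1) := by
    push_cast
    rw [← pow_add]
    congr 1
    omega
  have hmul : (2:ℝ)^(i+1) * (t + 1/2^(s+1)) = 2^(i+1)*t + ((2^(i-s) : ℕ):ℝ) := by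
    rw [mul_add, hsplit]
    have h2 : ((2:ℝ)^(s+1)) ≠ 0 := by positivity
    field_simp
  rw [hmul, Int.floor_add_natCast]
  have hA : 0 ≤ ⌊(2:ℝ)^(i+1)*t⌋ := Int.floor_nonneg.2 (by positivity)
  have hev : (2:ℕ)^(i-s) = 2*2^(i-s-1) := by
    rw [← pow_succ']
    congr 1
    omega
  omega

lemma dyadicBit_add_half_eq (s : ℕ) {t : ℝ} (htnn : 0 ≤ t) :
    dyadicBit (t + 1/2^(s+1)) s = 1 - dyadicBit t s := by
  unfold dyadicBit
  have hmul : (2:ℝ)^(s+1) * (t + 1/2^(s+1)) = 2^(s+1)*t + ((1:ℕ):ℝ) := by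
    have h2 : ((2:ℝ)^(s+1)) ≠ 0 := by positivity
    field_simp
    ring
  rw [hmul, Int.floor_add_natCast]
  have hA : 0 ≤ ⌊(2:ℝ)^(s+1)*t⌋ := Int.floor_nonneg.2 (by positivity)
  omega

lemma dyadicBit_add_half_low (s q : ℕ) {t : ℝ} (ht0 : (q:ℝ)/2^s ≤ t)
    (ht1 : t < (q:ℝ)/2^s + 1/2^(s+1)) (i : ℕ) (hi : i < s) :
    dyadicBit (t + 1/2^(s+1)) i = dyadicBit t i := by
  unfold dyadicBit
  set p := s - (i+1) with hp
  have hkey : (2:ℝ)^(i+1) * 2^p = 2^s := by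
    rw [← pow_add]
    congr 1
    omega
  have hppos : (0:ℝ) < 2^p := by positivity
  have hspos : (0:ℝ) < 2^s := by positivity
  have hipos : (0:ℝ) < 2^(i+1) := by positivity
  have hlow : (q:ℝ)/2^p ≤ 2^(i+1) * t := by
    rw [div_le_iff₀ hppos]
    calc (q:ℝ) = 2^(i+1) * ((q:ℝ)/2^s) * 2^p := by
          field_simp
          nlinarith [hkey]
      _ ≤ 2^(i+1) * t * 2^p := by
          have := mul_le_mul_of_nonneg_left ht0 (le_of_lt hipos)
          nlinarith
  have hhigh : 2^(i+1) * (t + 1/2^(s+1)) < ((q:ℝ)+1)/2^p := by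
    rw [lt_div_iff₀ hppos]
    have h1 : t + 1/2^(s+1) < (q:ℝ)/2^s + 1/2^s := by
      have hsum : (1:ℝ)/2^(s+1) + 1/2^(s+1) = 1/2^s := by
        rw [pow_succ]
        field_simp
        ring
      linarith
    have h2 : 2^(i+1) * (t + 1/2^(s+1)) < 2^(i+1) * (((q:ℝ)+1)/2^s) := by
      have : (q:ℝ)/2^s + 1/2^s = ((q:ℝ)+1)/2^s := by field_simp
      rw [← this]
      exact (mul_lt_mul_iff_right₀ hipos).2 h1
    calc 2^(i+1) * (t + 1/2^(s+1)) * 2^p < 2^(i+1) * (((q:ℝ)+1)/2^s) * 2^p := by nlinarith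
      _ = (q:ℝ)+1 := by
          field_simp
          nlinarith [hkey]
  have hlow2 : (q:ℝ)/2^p ≤ 2^(i+1) * (t + 1/2^(s+1)) := by
    have : (0:ℝ) < 2^(i+1) * (1/2^(s+1)) := by positivity
    nlinarith
  have hhigh2 : 2^(i+1) * t < ((q:ℝ)+1)/2^p := by
    have : (0:ℝ) < 2^(i+1) * (1/2^(s+1)) := by positivity
    nlinarith
  rw [floor_const_on_dyadic hlow2 hhigh, floor_const_on_dyadic hlow hhigh2]

lemma walsh_flip {n s : ℕ} (hbs : n.testBit s = true) (hsn : s ≤ n) (q : ℕ) {t : ℝ}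
    (ht0 : (q:ℝ)/2^s ≤ t) (ht1 : t < (q:ℝ)/2^s + 1/2^(s+1)) :
    walsh n (t + 1/2^(s+1)) = - walsh n t := by
  have htnn : 0 ≤ t := le_trans (by positivity) ht0
  have hmem : s ∈ Finset.range (n+1) := Finset.mem_range.2 (by omega)
  unfold walsh
  rw [← Finset.mul_prod_erase _ _ hmem, ← Finset.mul_prod_erase _ _ hmem]
  have hrest : ∏ i ∈ (Finset.range (n+1)).erase s,
      (if n.testBit i ∧ dyadicBit (t + 1/2^(s+1)) i = 1 then (-1:ℝ) else 1)
      = ∏ i ∈ (Finset.range (n+1)).erase s,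
      (if n.testBit i ∧ dyadicBit t i = 1 then (-1:ℝ) else 1) := by
    refine Finset.prod_congr rfl (fun i hi => ?_)
    have hine : i ≠ s := Finset.ne_of_mem_erase hi
    rcases lt_or_gt_of_ne hine with h | h
    · rw [dyadicBit_add_half_low s q ht0 ht1 i h]
    · rw [dyadicBit_add_half_high s q ht0 i h]
  rw [hrest]
  have hflip := dyadicBit_add_half_eq s htnn
  have hb1 := dyadicBit_le_one t s
  rcases Nat.le_one_iff_eq_zero_or_eq_one.mp hb1 with h0 | h0
  · rw [h0] at hflip
    simp only [Nat.sub_zero] at hflip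
    rw [hflip, h0]
    simp [hbs]
  · rw [h0] at hflip
    simp only [Nat.sub_self] at hflip
    rw [hflip, h0]
    simp [hbs]

lemma intervalIntegrable_walsh {n : ℕ} {a b : ℝ} : IntervalIntegrable (walsh n) volume a b :=
  intervalIntegrable_of_bounded (measurable_walsh n) (fun t => walsh_le_one n t)

lemma integral_walsh_half {n s : ℕ} (hbs : n.testBit s = true) (hsn : s ≤ n) (q : ℕ) :
    ∫ t in ((q:ℝ)/2^s)..((q:ℝ)/2^s + 1/2^(s+1)), walsh n (t + 1/2^(s+1))
      = ∫ t in ((q:ℝ)/2^s)..((q:ℝ)/2^s + 1/2^(s+1)), (- walsh n t) := by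
  refine intervalIntegral.integral_congr_ae ?_
  have hpos : (0:ℝ) < 1/2^(s+1) := by positivity
  rw [Filter.eventually_iff, MeasureTheory.mem_ae_iff]
  refine measure_mono_null (fun t ht => ?_) (measure_singleton ((q:ℝ)/2^s + 1/2^(s+1)))
  simp only [Set.mem_compl_iff, Set.mem_setOf_eq, Classical.not_imp] at ht
  obtain ⟨htmem, hne⟩ := ht
  rw [Set.uIoc_of_le (by linarith)] at htmem
  simp only [Set.mem_singleton_iff]
  by_contra hne2
  refine hne ?_
  have ht1 : t < (q:ℝ)/2^s + 1/2^(s+1) := lt_of_le_of_ne htmem.2 hne2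
  exact walsh_flip hbs hsn q (le_of_lt htmem.1) ht1

lemma integral_walsh_cell {n s : ℕ} (hbs : n.testBit s = true) (hsn : s ≤ n) (q : ℕ) :
    ∫ t in ((q:ℝ)/2^s)..(((q:ℝ)+1)/2^s), walsh n t = 0 := by
  have hsum : (q:ℝ)/2^s + 1/2^(s+1) + 1/2^(s+1) = ((q:ℝ)+1)/2^s := by
    rw [pow_succ]
    field_simp
    ring
  have hsplit : (∫ t in ((q:ℝ)/2^s)..((q:ℝ)/2^s + 1/2^(s+1)), walsh n t)
      + ∫ t in ((q:ℝ)/2^s + 1/2^(s+1))..((q:ℝ)/2^s + 1/2^(s+1) + 1/2^(s+1)), walsh n t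
      = ∫ t in ((q:ℝ)/2^s)..((q:ℝ)/2^s + 1/2^(s+1) + 1/2^(s+1)), walsh n t :=
    intervalIntegral.integral_add_adjacent_intervals intervalIntegrable_walsh intervalIntegrable_walsh
  have htrans : ∫ t in ((q:ℝ)/2^s + 1/2^(s+1))..((q:ℝ)/2^s + 1/2^(s+1) + 1/2^(s+1)), walsh n t
      = ∫ t in ((q:ℝ)/2^s)..((q:ℝ)/2^s + 1/2^(s+1)), walsh n (t + 1/2^(s+1)) := by
    rw [intervalIntegral.integral_comp_add_right (fun u => walsh n u) (1/2^(s+1))]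
  have hneg : ∫ t in ((q:ℝ)/2^s)..((q:ℝ)/2^s + 1/2^(s+1)), (- walsh n t)
      = - ∫ t in ((q:ℝ)/2^s)..((q:ℝ)/2^s + 1/2^(s+1)), walsh n t :=
    intervalIntegral.integral_neg
  rw [htrans, integral_walsh_half hbs hsn q, hneg] at hsplit
  rw [← hsum]
  linarith [hsplit]

lemma integral_walsh_G {n m j : ℕ} (hn : 2^m ≤ n) (hj : 1 ≤ j) :
    ∫ t in (((j:ℝ)-1)/2^m)..((j:ℝ)/2^m), walsh n t = 0 := by
  have hn0 : n ≠ 0 := by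
    have : 0 < 2^m := Nat.pow_pos (by norm_num)
    omega
  have h2s : 2 ^ Nat.log2 n ≤ n := Nat.log2_self_le hn0
  have hks : n < 2 ^ (Nat.log2 n + 1) := Nat.lt_log2_self
  set s := Nat.log2 n with hs
  have hms : m ≤ s := by
    by_contra hcon
    push_neg at hcon
    have : (2:ℕ)^(s+1) ≤ 2^m := Nat.pow_le_pow_right (by norm_num) (by omega)
    omega
  have hsn : s ≤ n := le_trans (Nat.le_of_lt (Nat.lt_two_pow_self (n := s))) h2s
  have hbs : n.testBit s = true := by
    have hj' : n - 2^s < 2^s := by rw [pow_succ] at hks; omega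
    have hrepr : n = 2^s + (n - 2^s) := by omega
    rw [hrepr, testBit_two_pow_add hj']
    simp
  have hint : ∀ k < 2^(s-m), IntervalIntegrable (walsh n) volume
      (((((j-1) * 2^(s-m) + k : ℕ)):ℝ)/2^s) (((((j-1) * 2^(s-m) + (k+1) : ℕ)):ℝ)/2^s) :=
    fun k _ => intervalIntegrable_walsh
  have key := intervalIntegral.sum_integral_adjacent_intervals
    (a := fun i : ℕ => (((j-1) * 2^(s-m) + i : ℕ):ℝ)/2^s) (μ := volume) (f := walsh n) hint
  have hzero : ∀ k ∈ Finset.range (2^(s-m)),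
      (∫ x in ((((j-1) * 2^(s-m) + k : ℕ)):ℝ)/2^s..((((j-1) * 2^(s-m) + (k+1) : ℕ)):ℝ)/2^s,
        walsh n x) = 0 := by
    intro k _
    have hcell := integral_walsh_cell hbs hsn ((j-1) * 2^(s-m) + k)
    have hc : ((((j-1) * 2^(s-m) + (k+1) : ℕ)):ℝ) = (((j-1) * 2^(s-m) + k : ℕ):ℝ) + 1 := by
      push_cast; ring
    rw [hc]
    exact hcell
  rw [Finset.sum_congr rfl hzero] at key
  simp only [Finset.sum_const, smul_zero] at key
  have hpow : (2:ℝ)^(s-m) * 2^m = 2^s := by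
    rw [← pow_add]
    congr 1
    omega
  have hmpos : (0:ℝ) < 2^m := by positivity
  have hspos : (0:ℝ) < 2^s := by positivity
  have ha0 : ((((j-1) * 2^(s-m) + 0 : ℕ)):ℝ)/2^s = ((j:ℝ)-1)/2^m := by
    have hcast : ((((j-1) * 2^(s-m) + 0 : ℕ)):ℝ) = ((j:ℝ)-1) * 2^(s-m) := by
      push_cast [Nat.cast_sub hj]
      ring
    rw [hcast, div_eq_div_iff (ne_of_gt hspos) (ne_of_gt hmpos)]
    rw [mul_assoc, hpow]
  have haN : ((((j-1) * 2^(s-m) + 2^(s-m) : ℕ)):ℝ)/2^s = (j:ℝ)/2^m := by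
    have hcast : ((((j-1) * 2^(s-m) + 2^(s-m) : ℕ)):ℝ) = (j:ℝ) * 2^(s-m) := by
      push_cast [Nat.cast_sub hj]
      ring
    rw [hcast, div_eq_div_iff (ne_of_gt hspos) (ne_of_gt hmpos)]
    rw [mul_assoc, hpow]
  rw [ha0, haN] at key
  exact key.symm

lemma indicator_mul_fun (a b : ℝ) (f : ℝ → ℝ) (t : ℝ) :
    f t * (Set.indicator (Set.Ico a b) 1 t) = Set.indicator (Set.Ico a b) f t := by
  by_cases ht : t ∈ Set.Ico a b <;> simp [ht]

lemma ico_inter_ae {a b : ℝ} (h0a : (0:ℝ) ≤ a) (hab : a < b) (hb1 : b ≤ 1) :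
    (Set.Ioc 0 1 ∩ Set.Ico a b : Set ℝ) =ᵐ[volume] (Set.Ioc a b : Set ℝ) := by
  rw [MeasureTheory.ae_eq_set]
  constructor
  · refine measure_mono_null (fun u hu => ?_) (measure_singleton a)
    obtain ⟨⟨_, ⟨hu1, hu2⟩⟩, hu4⟩ := hu
    simp only [Set.mem_Ioc, not_and, not_le] at hu4
    simp only [Set.mem_singleton_iff]
    rcases le_or_gt u a with h | h
    · linarith
    · exfalso
      have := hu4 h
      linarith
  · refine measure_mono_null (fun u hu => ?_) (measure_singleton b)
    obtain ⟨⟨hu1, hu2⟩, hu3⟩ := hu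
    simp only [Set.mem_singleton_iff]
    rcases lt_or_ge u b with h | h
    · exfalso
      refine hu3 ?_
      have h0u : (0:ℝ) < u := lt_of_le_of_lt h0a hu1
      exact ⟨⟨h0u, le_trans hu2 hb1⟩, ⟨le_of_lt hu1, h⟩⟩
    · linarith

lemma integral_mul_indicator {a b : ℝ} (h0a : (0:ℝ) ≤ a) (hab : a < b) (hb1 : b ≤ 1)
    {f : ℝ → ℝ} (hf : Measurable f) :
    ∫ t in (0:ℝ)..1, f t * (Set.indicator (Set.Ico a b) 1 t) = ∫ t in a..b, f t := by
  rw [intervalIntegral.integral_of_le (by norm_num : (0:ℝ) ≤ 1),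
      intervalIntegral.integral_of_le (le_of_lt hab)]
  have hfe : (fun t => f t * (Set.indicator (Set.Ico a b) 1 t))
      = Set.indicator (Set.Ico a b) f := by
    funext t; exact indicator_mul_fun a b f t
  rw [hfe, MeasureTheory.setIntegral_indicator measurableSet_Ico]
  exact MeasureTheory.setIntegral_congr_set (ico_inter_ae h0a hab hb1)

lemma walshSum_rep {a b : ℝ} (h0a : (0:ℝ) ≤ a) (hab : a < b) (hb1 : b ≤ 1)
    {x : ℝ} (hx0 : 0 ≤ x) (hx1 : x < 1) (k : ℕ) :
    walshSum k (Set.indicator (Set.Ico a b) 1) x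
      = ∑ n ∈ Finset.range k, walsh n x * ∫ t in a..b, walsh n t := by
  have hgmeas : Measurable (Set.indicator (Set.Ico a b) (1:ℝ→ℝ)) :=
    measurable_const.indicator measurableSet_Ico
  have hgbd : ∀ t, |Set.indicator (Set.Ico a b) (1:ℝ→ℝ) t| ≤ 1 := by
    intro t
    by_cases ht : t ∈ Set.Ico a b <;> simp [ht]
  have hintg : ∀ n ∈ Finset.range k, IntervalIntegrable
      (fun t => walsh n (dyadicAdd x t) * Set.indicator (Set.Ico a b) 1 t) volume 0 1 := by
    intro n _
    refine intervalIntegrable_of_bounded (C := 1)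
      (((measurable_walsh n).comp (measurable_dyadicAdd x)).mul hgmeas) (fun t => ?_)
    rw [abs_mul, abs_walsh, one_mul]
    exact hgbd t
  unfold walshSum walshDirichlet
  simp only [Finset.sum_mul]
  rw [intervalIntegral.integral_finset_sum hintg]
  refine Finset.sum_congr rfl (fun n _ => ?_)
  have hcong : ∫ t in (0:ℝ)..1, walsh n (dyadicAdd x t) * Set.indicator (Set.Ico a b) 1 t
      = ∫ t in (0:ℝ)..1, walsh n x * (walsh n t * Set.indicator (Set.Ico a b) 1 t) := by
    refine intervalIntegral.integral_congr_ae ?_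
    have hnull : volume (badSet x ∪ {1}) = 0 :=
      measure_union_null ((countable_badSet x).measure_zero _) (measure_singleton 1)
    rw [Filter.eventually_iff, MeasureTheory.mem_ae_iff]
    refine measure_mono_null (fun t ht => ?_) hnull
    simp only [Set.mem_compl_iff, Set.mem_setOf_eq, Classical.not_imp] at ht
    obtain ⟨htmem, hne⟩ := ht
    rw [Set.uIoc_of_le (by norm_num : (0:ℝ) ≤ 1)] at htmem
    by_contra hnotbad
    simp only [Set.mem_union, Set.mem_singleton_iff, not_or] at hnotbad
    obtain ⟨hnb, hne1⟩ := hnotbad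
    refine hne ?_
    have ht0 : 0 ≤ t := le_of_lt htmem.1
    have ht1 : t < 1 := lt_of_le_of_ne htmem.2 hne1
    have hz := good_of_not_bad ⟨ht0, ht1⟩ hnb
    have hbits := fun i => dyadicBit_dyadicAdd hz i
    rw [walsh_dyadicAdd n hbits]
    ring
  rw [hcong, intervalIntegral.integral_const_mul,
    integral_mul_indicator h0a hab hb1 (measurable_walsh n)]

lemma walshSum_reduce {m j : ℕ} (hj : 1 ≤ j) (hjm : j ≤ 2^m)
    {x : ℝ} (hx0 : 0 ≤ x) (hx1 : x < 1) (k : ℕ) :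
    walshSum k (Set.indicator (Set.Ico (((j:ℝ)-1)/2^m) ((j:ℝ)/2^m)) 1) x
      = walshSum (min k (2^m)) (Set.indicator (Set.Ico (((j:ℝ)-1)/2^m) ((j:ℝ)/2^m)) 1) x := by
  have hmp : (0:ℝ) < 2^m := by positivity
  have h0a : (0:ℝ) ≤ ((j:ℝ)-1)/2^m := by
    apply div_nonneg _ (le_of_lt hmp)
    have : (1:ℝ) ≤ (j:ℝ) := by exact_mod_cast hj
    linarith
  have hab : ((j:ℝ)-1)/2^m < (j:ℝ)/2^m := by
    rw [div_lt_div_iff₀ hmp hmp]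
    have : (1:ℝ) ≤ (j:ℝ) := by exact_mod_cast hj
    nlinarith
  have hb1 : (j:ℝ)/2^m ≤ 1 := by
    rw [div_le_one hmp]
    exact_mod_cast hjm
  rw [walshSum_rep h0a hab hb1 hx0 hx1 k, walshSum_rep h0a hab hb1 hx0 hx1 (min k (2^m))]
  symm
  refine Finset.sum_subset (Finset.range_subset_range.2 (min_le_left _ _)) ?_
  intro n hn hnot
  have hn2 : 2^m ≤ n := by
    simp only [Finset.mem_range] at hn hnot
    omega
  rw [integral_walsh_G hn2 hj, mul_zero]

lemma abs_integral_walsh_le {m j n : ℕ} (hj : 1 ≤ j) :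
    |∫ t in (((j:ℝ)-1)/2^m)..((j:ℝ)/2^m), walsh n t| ≤ ((2:ℝ)^m)⁻¹ := by
  have hmp : (0:ℝ) < 2^m := by positivity
  have hba : (j:ℝ)/2^m - ((j:ℝ)-1)/2^m = ((2:ℝ)^m)⁻¹ := by
    field_simp
    ring
  have h := intervalIntegral.norm_integral_le_of_norm_le_const
    (C := 1) (f := walsh n) (a := ((j:ℝ)-1)/2^m) (b := (j:ℝ)/2^m)
    (fun t _ => by rw [Real.norm_eq_abs, abs_walsh])
  rw [Real.norm_eq_abs] at h
  calc |∫ t in (((j:ℝ)-1)/2^m)..((j:ℝ)/2^m), walsh n t| ≤ 1 * |(j:ℝ)/2^m - (((j:ℝ)-1)/2^m)| := h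
    _ = ((2:ℝ)^m)⁻¹ := by
        rw [one_mul, hba, abs_of_nonneg (by positivity)]

lemma abs_walshSum_le_one {m j : ℕ} (hj : 1 ≤ j) (hjm : j ≤ 2^m)
    {x : ℝ} (hx0 : 0 ≤ x) (hx1 : x < 1) (k : ℕ) :
    |walshSum k (Set.indicator (Set.Ico (((j:ℝ)-1)/2^m) ((j:ℝ)/2^m)) 1) x| ≤ 1 := by
  have hmp : (0:ℝ) < 2^m := by positivity
  have h0a : (0:ℝ) ≤ ((j:ℝ)-1)/2^m := by
    apply div_nonneg _ (le_of_lt hmp)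
    have : (1:ℝ) ≤ (j:ℝ) := by exact_mod_cast hj
    linarith
  have hab : ((j:ℝ)-1)/2^m < (j:ℝ)/2^m := by
    rw [div_lt_div_iff₀ hmp hmp]
    have : (1:ℝ) ≤ (j:ℝ) := by exact_mod_cast hj
    nlinarith
  have hb1 : (j:ℝ)/2^m ≤ 1 := by
    rw [div_le_one hmp]
    exact_mod_cast hjm
  rw [walshSum_reduce hj hjm hx0 hx1 k,
    walshSum_rep h0a hab hb1 hx0 hx1 (min k (2^m))]
  calc |∑ n ∈ Finset.range (min k (2^m)), walsh n x * ∫ t in (((j:ℝ)-1)/2^m)..((j:ℝ)/2^m), walsh n t|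
      ≤ ∑ n ∈ Finset.range (min k (2^m)),
          |walsh n x * ∫ t in (((j:ℝ)-1)/2^m)..((j:ℝ)/2^m), walsh n t| :=
        Finset.abs_sum_le_sum_abs _ _
    _ ≤ ∑ n ∈ Finset.range (min k (2^m)), ((2:ℝ)^m)⁻¹ := by
        refine Finset.sum_le_sum (fun n _ => ?_)
        rw [abs_mul, abs_walsh, one_mul]
        exact abs_integral_walsh_le hj
    _ = (min k (2^m) : ℕ) * ((2:ℝ)^m)⁻¹ := by
        rw [Finset.sum_const, Finset.card_range]
        simp
    _ ≤ 1 := by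
        have hle : ((min k (2^m) : ℕ) : ℝ) ≤ 2^m := by
          have : (min k (2^m) : ℕ) ≤ 2^m := min_le_right _ _
          calc ((min k (2^m) : ℕ) : ℝ) ≤ ((2^m : ℕ) : ℝ) := by exact_mod_cast this
            _ = 2^m := by push_cast; ring
        calc ((min k (2^m) : ℕ) : ℝ) * ((2:ℝ)^m)⁻¹ ≤ 2^m * ((2:ℝ)^m)⁻¹ := by
              exact mul_le_mul_of_nonneg_right hle (by positivity)
          _ = 1 := by field_simp

lemma abs_walshSum_far {m j : ℕ} (hj : 1 ≤ j) (hjm : j ≤ 2^m)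
    {x : ℝ} (hx0 : 0 ≤ x) (hx1 : x < 1) {δ : ℝ} (hδ : 0 < δ)
    (hfar : ∀ t, t ∈ Set.Ico (((j:ℝ)-1)/2^m) ((j:ℝ)/2^m) → δ ≤ |x - t|) (k : ℕ) :
    |walshSum k (Set.indicator (Set.Ico (((j:ℝ)-1)/2^m) ((j:ℝ)/2^m)) 1) x|
      ≤ (2/δ) * ((2:ℝ)^m)⁻¹ := by
  have hmp : (0:ℝ) < 2^m := by positivity
  have h0a : (0:ℝ) ≤ ((j:ℝ)-1)/2^m := by
    apply div_nonneg _ (le_of_lt hmp)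
    have : (1:ℝ) ≤ (j:ℝ) := by exact_mod_cast hj
    linarith
  have hab : ((j:ℝ)-1)/2^m < (j:ℝ)/2^m := by
    rw [div_lt_div_iff₀ hmp hmp]
    have : (1:ℝ) ≤ (j:ℝ) := by exact_mod_cast hj
    nlinarith
  have hb1 : (j:ℝ)/2^m ≤ 1 := by
    rw [div_le_one hmp]
    exact_mod_cast hjm
  rw [walshSum_reduce hj hjm hx0 hx1 k]
  set k' := min k (2^m) with hk'
  have hk'le : k' ≤ 2^m := min_le_right _ _
  have hgmeas : Measurable (Set.indicator (Set.Ico (((j:ℝ)-1)/2^m) ((j:ℝ)/2^m)) (1:ℝ→ℝ)) :=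
    measurable_const.indicator measurableSet_Ico
  have hgbd : ∀ t, |Set.indicator (Set.Ico (((j:ℝ)-1)/2^m) ((j:ℝ)/2^m)) (1:ℝ→ℝ) t| ≤ 1 := by
    intro t
    by_cases ht : t ∈ Set.Ico (((j:ℝ)-1)/2^m) ((j:ℝ)/2^m) <;> simp [ht]
  have hgnn : ∀ t, 0 ≤ Set.indicator (Set.Ico (((j:ℝ)-1)/2^m) ((j:ℝ)/2^m)) (1:ℝ→ℝ) t := by
    intro t
    by_cases ht : t ∈ Set.Ico (((j:ℝ)-1)/2^m) ((j:ℝ)/2^m) <;> simp [ht]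
  set g := Set.indicator (Set.Ico (((j:ℝ)-1)/2^m) ((j:ℝ)/2^m)) (1:ℝ→ℝ) with hg
  set F := fun t : ℝ => walshDirichlet k' (dyadicAdd x t) * g t with hF
  have hFmeas : Measurable F :=
    ((measurable_walshDirichlet k').comp (measurable_dyadicAdd x)).mul hgmeas
  have hFbd : ∀ t, |F t| ≤ (2^m : ℝ) := by
    intro t
    rw [hF]
    simp only
    rw [abs_mul]
    have h1 : |walshDirichlet k' (dyadicAdd x t)| ≤ (k' : ℝ) := abs_walshDirichlet_le _ _
    have h2 : (k' : ℝ) ≤ (2^m : ℝ) := by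
      calc (k' : ℝ) ≤ ((2^m : ℕ) : ℝ) := by exact_mod_cast hk'le
        _ = 2^m := by push_cast; ring
    calc |walshDirichlet k' (dyadicAdd x t)| * |g t| ≤ (2^m : ℝ) * 1 := by
          exact mul_le_mul (le_trans h1 h2) (hgbd t) (abs_nonneg _) (by positivity)
      _ = 2^m := mul_one _
  have hFint : IntervalIntegrable F volume 0 1 := intervalIntegrable_of_bounded hFmeas hFbd
  have hFint2 : IntervalIntegrable (fun t => |F t|) volume 0 1 :=
    intervalIntegrable_of_bounded hFmeas.abs (fun t => by rw [abs_abs]; exact hFbd t)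
  have hGint : IntervalIntegrable (fun t => (2/δ) * g t) volume 0 1 :=
    intervalIntegrable_of_bounded (measurable_const.mul hgmeas) (fun t => by
      rw [abs_mul]
      calc |2/δ| * |g t| ≤ |2/δ| * 1 := by
            exact mul_le_mul_of_nonneg_left (hgbd t) (abs_nonneg _)
        _ = 2/δ := by rw [mul_one, abs_of_pos (by positivity)])
  have hae : (fun t => |F t|) ≤ᶠ[MeasureTheory.ae volume] (fun t => (2/δ) * g t) := by
    rw [Filter.EventuallyLE, Filter.eventually_iff, MeasureTheory.mem_ae_iff]
    refine measure_mono_null (fun t ht => ?_) ((countable_badSet x).measure_zero volume)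
    simp only [Set.mem_compl_iff, Set.mem_setOf_eq, not_le] at ht
    by_contra hnb
    refine absurd ht (not_lt.2 ?_)
    by_cases htm : t ∈ Set.Ico (((j:ℝ)-1)/2^m) ((j:ℝ)/2^m)
    · have ht0 : 0 ≤ t := le_trans h0a htm.1
      have ht1 : t < 1 := lt_of_lt_of_le htm.2 hb1
      have hz := good_of_not_bad ⟨ht0, ht1⟩ hnb
      have hu1 : |x - t| ≤ dyadicAdd x t := abs_sub_le_dyadicAdd hx0 hx1 ht0 ht1
      have hδu : δ ≤ dyadicAdd x t := le_trans (hfar t htm) hu1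
      have hu0 : 0 < dyadicAdd x t := lt_of_lt_of_le hδ hδu
      have hu2 : dyadicAdd x t < 1 := by
        obtain ⟨i, _, hi⟩ := hz 0
        exact dyadicAdd_lt_one ⟨i, hi⟩
      have hD := walshDirichlet_bound k' (dyadicAdd x t) hu0 hu2
      have hg1 : g t = 1 := by rw [hg]; simp [htm]
      rw [hF]
      simp only
      rw [abs_mul, hg1, mul_one, abs_one, mul_one]
      calc |walshDirichlet k' (dyadicAdd x t)| ≤ 2 / dyadicAdd x t := hD
        _ ≤ 2/δ := by
            apply div_le_div_of_nonneg_left (by norm_num) hδ hδu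
    · have hg0 : g t = 0 := by rw [hg]; simp [htm]
      rw [hF]
      simp only
      rw [hg0, mul_zero, abs_zero, mul_zero]
  have hmono := intervalIntegral.integral_mono_ae (by norm_num : (0:ℝ) ≤ 1) hFint2 hGint hae
  have habs := intervalIntegral.abs_integral_le_integral_abs (μ := volume)
    (f := F) (a := 0) (b := 1) (by norm_num)
  have hconst : ∫ t in (0:ℝ)..1, (2/δ) * g t
      = (2/δ) * ((2:ℝ)^m)⁻¹ := by
    rw [hg]
    rw [integral_mul_indicator h0a hab hb1 (measurable_const : Measurable (fun _ : ℝ => 2/δ))]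
    rw [intervalIntegral.integral_const]
    have hba : (j:ℝ)/2^m - ((j:ℝ)-1)/2^m = ((2:ℝ)^m)⁻¹ := by field_simp; ring
    rw [smul_eq_mul, hba]
    ring
  have hws : walshSum k' g x = ∫ t in (0:ℝ)..1, F t := by
    rw [hF]
    unfold walshSum
    rfl
  rw [hws]
  calc |∫ t in (0:ℝ)..1, F t| ≤ ∫ t in (0:ℝ)..1, |F t| := habs
    _ ≤ ∫ t in (0:ℝ)..1, (2/δ) * g t := hmono
    _ = (2/δ) * ((2:ℝ)^m)⁻¹ := hconst

theorem stmt12 :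
    ∃ c : ℝ, 0 < c ∧
      ∀ m j : ℕ, 1 ≤ j → j ≤ 2 ^ m →
        ∀ lam : ℝ, 0 < lam →
          volume {x ∈ Set.Ico (0 : ℝ) 1 |
              ∃ k : ℕ, 1 ≤ k ∧ lam < |walshSum k
                (Set.indicator (Set.Ico (((j : ℝ) - 1) / 2 ^ m) ((j : ℝ) / 2 ^ m)) 1) x|} ≤
            ENNReal.ofReal (c * ((2 : ℝ) ^ m)⁻¹ / lam) := by
  refine ⟨9, by norm_num, ?_⟩
  intro m j hj hjm lam hlam
  have hmp : (0:ℝ) < 2^m := by positivity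
  rcases le_or_gt 1 lam with hl1 | hl1
  · -- E is empty
    have hsub : {x ∈ Set.Ico (0 : ℝ) 1 |
        ∃ k : ℕ, 1 ≤ k ∧ lam < |walshSum k
          (Set.indicator (Set.Ico (((j : ℝ) - 1) / 2 ^ m) ((j : ℝ) / 2 ^ m)) 1) x|} ⊆ ∅ := by
      intro x hx
      obtain ⟨⟨hx0, hx1⟩, k, _, hgt⟩ := hx
      have := abs_walshSum_le_one hj hjm hx0 hx1 k
      exfalso
      linarith
    calc volume {x ∈ Set.Ico (0 : ℝ) 1 |
        ∃ k : ℕ, 1 ≤ k ∧ lam < |walshSum k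
          (Set.indicator (Set.Ico (((j : ℝ) - 1) / 2 ^ m) ((j : ℝ) / 2 ^ m)) 1) x|}
        ≤ volume (∅ : Set ℝ) := measure_mono hsub
      _ = 0 := measure_empty
      _ ≤ _ := zero_le
  · -- far-field case
    set r : ℝ := 4 * ((2:ℝ)^m)⁻¹ / lam with hr
    have hrpos : 0 < r := by rw [hr]; positivity
    have hsub : {x ∈ Set.Ico (0 : ℝ) 1 |
        ∃ k : ℕ, 1 ≤ k ∧ lam < |walshSum k
          (Set.indicator (Set.Ico (((j : ℝ) - 1) / 2 ^ m) ((j : ℝ) / 2 ^ m)) 1) x|}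
        ⊆ Set.Icc (((j : ℝ) - 1) / 2 ^ m - r) ((j : ℝ) / 2 ^ m + r) := by
      intro x hx
      obtain ⟨⟨hx0, hx1⟩, k, _, hgt⟩ := hx
      by_contra hnot
      simp only [Set.mem_Icc, not_and, not_le] at hnot
      have hfar : ∀ t, t ∈ Set.Ico (((j:ℝ)-1)/2^m) ((j:ℝ)/2^m) → r ≤ |x - t| := by
        intro t ⟨ht1, ht2⟩
        rcases lt_or_ge x (((j : ℝ) - 1) / 2 ^ m - r) with h | h
        · rw [abs_sub_comm, abs_of_nonneg (by linarith)]
          linarith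
        · have hbig := hnot h
          rw [abs_of_nonneg (by linarith)]
          linarith
      have hbound := abs_walshSum_far hj hjm hx0 hx1 hrpos hfar k
      have hcalc : (2/r) * ((2:ℝ)^m)⁻¹ = lam / 2 := by
        rw [hr]
        field_simp
        ring
      rw [hcalc] at hbound
      linarith
    calc volume {x ∈ Set.Ico (0 : ℝ) 1 |
        ∃ k : ℕ, 1 ≤ k ∧ lam < |walshSum k
          (Set.indicator (Set.Ico (((j : ℝ) - 1) / 2 ^ m) ((j : ℝ) / 2 ^ m)) 1) x|}
        ≤ volume (Set.Icc (((j : ℝ) - 1) / 2 ^ m - r) ((j : ℝ) / 2 ^ m + r)) :=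
          measure_mono hsub
      _ = ENNReal.ofReal (((j : ℝ) / 2 ^ m + r) - ((((j : ℝ) - 1) / 2 ^ m) - r)) :=
          Real.volume_Icc
      _ ≤ ENNReal.ofReal (9 * ((2 : ℝ) ^ m)⁻¹ / lam) := by
          apply ENNReal.ofReal_le_ofReal
          have hba : (j:ℝ)/2^m - ((j:ℝ)-1)/2^m = ((2:ℝ)^m)⁻¹ := by field_simp; ring
          have h1 : ((j : ℝ) / 2 ^ m + r) - ((((j : ℝ) - 1) / 2 ^ m) - r)
              = ((2:ℝ)^m)⁻¹ + 2*r := by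
            rw [← hba]; ring
          rw [h1, hr]
          have h2 : ((2:ℝ)^m)⁻¹ ≤ ((2:ℝ)^m)⁻¹ / lam := by
            rw [le_div_iff₀ hlam]
            have : (0:ℝ) < ((2:ℝ)^m)⁻¹ := by positivity
            nlinarith
          have h3 : 2 * (4 * ((2:ℝ)^m)⁻¹ / lam) = 8 * ((2:ℝ)^m)⁻¹ / lam := by ring
          rw [h3]
          have h4 : 9 * ((2:ℝ)^m)⁻¹ / lam = ((2:ℝ)^m)⁻¹/lam + 8 * ((2:ℝ)^m)⁻¹ / lam := by ring
          rw [h4]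
          linarith
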